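/- Let D and X be Banach spaces with D continuously and densely embedded in X, and let A : [0,T] → L(D,X) be bounded and strongly measurable with ‖A(t)x‖_X ≤ C‖x‖_D for all x ∈ D and a.e. t. Let A_Λ^S be the step approximation by interval averages over a uniform subdivision Λ. If u_Λ → u in L^p(0,T; D) for some 1 ≤ p < ∞, then A_Λ^S(·)u_Λ(·) → A(·)u(·) in L^p(0,T; X) as |Λ| → 0. -/

import Mathlib

open MeasureTheory Filter intervalIntegral

noncomputable section

variable {X : Type*} [NormedAddCommGroup X] [NormedSpace ℝ X] [CompleteSpace X]

/-- Average of `f` over the `k`-th interval of the uniform subdivision of `[0,T]`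
into `n+1` subintervals. -/
def uavg (f : ℝ → X) (T : ℝ) (n k : ℕ) : X :=
  ((n + 1 : ℝ) / T) • ∫ r in ((k : ℝ) * (T / (n + 1)))..(((k : ℝ) + 1) * (T / (n + 1))), f r

/-- Index of the subinterval containing `t` (clamped to `n`). -/
def uidx (T : ℝ) (n : ℕ) (t : ℝ) : ℕ := min ⌊t * (n + 1) / T⌋₊ n

/-- Piecewise constant (step) approximation of `f` by interval averages. -/
def stepApprox (f : ℝ → X) (T : ℝ) (n : ℕ) (t : ℝ) : X := uavg f T n (uidx T n t)

/-- The step approximation `A_Λ^S(t)x` of a strongly measurable operator family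
`A : [0,T] → L(D,X)`, applied to `x ∈ D`. -/
def opStep {D : Type*} [NormedAddCommGroup D] [NormedSpace ℝ D]
    (A : ℝ → D →L[ℝ] X) (T : ℝ) (n : ℕ) (t : ℝ) (x : D) : X :=
  stepApprox (fun r => A r x) T n t

/-!
The step approximation at time `t` is the average of `A` over the cell of the subdivision that
contains `t`, so for each fixed `x` the Lebesgue differentiation theorem gives
`A_Λ^S(t) x → A(t) x` for a.e. `t`; as all these operators are bounded by `C`, Vitali's
convergence theorem upgrades this to convergence in `L^p`. Uniform boundedness then carries the
convergence from constants to simple functions, to all of `L^p` by density of simple functions,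
and finally to the moving arguments `u_Λ → u`.
-/

open Set Topology

namespace MeasureTheory

variable {α E F : Type*} [MeasurableSpace α]

theorem SimpleFunc.apply_eq_sum_indicator [AddCommMonoid F] (G : α → E → F) (s : SimpleFunc α E)
    (t : α) :
    G t (s t) = ∑ c ∈ s.range, (s ⁻¹' {c}).indicator (fun t' => G t' c) t := by
  rw [Finset.sum_eq_single_of_mem (s t) (s.mem_range_self t),
    indicator_of_mem (show t ∈ s ⁻¹' {s t} from rfl)]
  exact fun c _ hc => indicator_of_notMem (Ne.symm hc) _

theorem SimpleFunc.stronglyMeasurable_apply [AddCommMonoid F] [TopologicalSpace F]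
    [ContinuousAdd F] {G : α → E → F}
    (hG : ∀ x, StronglyMeasurable fun t => G t x) (s : SimpleFunc α E) :
    StronglyMeasurable fun t => G t (s t) := by
  rw [funext (s.apply_eq_sum_indicator G)]
  exact Finset.stronglyMeasurable_fun_sum _ fun c _ =>
    (hG c).indicator (s.measurableSet_preimage _)

variable [NormedAddCommGroup E] [NormedAddCommGroup F]

theorem AEStronglyMeasurable.apply_of_stronglyMeasurable {μ : Measure α} {G : α → E → F}
    (hG : ∀ x, StronglyMeasurable fun t => G t x) (hGc : ∀ t, Continuous (G t))
    {v : α → E} (hv : AEStronglyMeasurable v μ) :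
    AEStronglyMeasurable (fun t => G t (v t)) μ := by
  obtain ⟨g, hg, hvg⟩ := hv
  refine ⟨fun t => G t (g t), stronglyMeasurable_of_tendsto atTop
    (fun j => (hg.approx j).stronglyMeasurable_apply hG) ?_, ?_⟩
  · exact tendsto_pi_nhds.2 fun t => ((hGc t).tendsto (g t)).comp (hg.tendsto_approx t)
  · filter_upwards [hvg] with t ht
    rw [ht]

theorem unifIntegrable_of_ae_norm_le {ι : Type*} {μ : Measure α} {p : ENNReal} (hp1 : 1 ≤ p)
    (hp : p ≠ ⊤) {f : ι → α → E} (hf : ∀ i, AEStronglyMeasurable (f i) μ) {M : ℝ}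
    (hM : ∀ i, ∀ᵐ t ∂μ, ‖f i t‖ ≤ M) : UnifIntegrable f p μ := by
  refine unifIntegrable_of hp1 hp hf fun ε _ => ⟨M.toNNReal + 1, fun i => ?_⟩
  have hzero : {t | M.toNNReal + 1 ≤ ‖f i t‖₊}.indicator (f i) =ᵐ[μ] 0 := by
    filter_upwards [hM i] with t ht
    refine indicator_of_notMem (fun hlarge => ?_) _
    have hlarge' : (M.toNNReal : ℝ) + 1 ≤ ‖f i t‖ := by exact_mod_cast hlarge
    linarith [M.le_coe_toNNReal]
  rw [eLpNorm_congr_ae hzero, eLpNorm_zero]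
  exact zero_le

section OperatorFamily

variable [NormedSpace ℝ E] [NormedSpace ℝ F] {μ : Measure α} {p : ENNReal}
  {B : ℕ → α → E →L[ℝ] F} {B₀ : α → E →L[ℝ] F}

theorem AEStronglyMeasurable.clm_apply_of_stronglyMeasurable {G : α → E →L[ℝ] F}
    (hG : ∀ x, StronglyMeasurable fun t => G t x) {v : α → E} (hv : AEStronglyMeasurable v μ) :
    AEStronglyMeasurable (fun t => G t (v t)) μ :=
  hv.apply_of_stronglyMeasurable hG fun t => (G t).continuous

theorem tendsto_eLpNorm_apply_sub_of_simpleFunc (hp1 : 1 ≤ p)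
    (hBm : ∀ n x, StronglyMeasurable fun t => B n t x)
    (hB₀m : ∀ x, StronglyMeasurable fun t => B₀ t x)
    (hconst : ∀ x, Tendsto (fun n => eLpNorm (fun t => B n t x - B₀ t x) p μ) atTop (𝓝 0))
    (s : SimpleFunc α E) :
    Tendsto (fun n => eLpNorm (fun t => B n t (s t) - B₀ t (s t)) p μ) atTop (𝓝 0) := by
  have hle : ∀ n, eLpNorm (fun t => B n t (s t) - B₀ t (s t)) p μ
      ≤ ∑ c ∈ s.range, eLpNorm (fun t => B n t c - B₀ t c) p μ := fun n => by
    have hsum : (fun t => B n t (s t) - B₀ t (s t))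
        = ∑ c ∈ s.range, (s ⁻¹' {c}).indicator (fun t => B n t c - B₀ t c) := by
      ext t
      rw [Finset.sum_apply]
      exact s.apply_eq_sum_indicator (fun t x => B n t x - B₀ t x) t
    rw [hsum]
    refine (eLpNorm_sum_le (fun c _ => (((hBm n c).sub (hB₀m c)).indicator
      (s.measurableSet_preimage _)).aestronglyMeasurable) hp1).trans ?_
    exact Finset.sum_le_sum fun c _ => eLpNorm_indicator_le _
  have hlim := tendsto_finsetSum s.range fun c _ => hconst c
  rw [Finset.sum_const_zero] at hlim
  exact tendsto_of_tendsto_of_tendsto_of_le_of_le tendsto_const_nhds hlim (fun _ => zero_le) hle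

theorem eLpNorm_apply_sub_apply_le (hp1 : 1 ≤ p) {G G₀ : α → E →L[ℝ] F}
    (hGm : ∀ x, StronglyMeasurable fun t => G t x) (hG₀m : ∀ x, StronglyMeasurable fun t => G₀ t x)
    {M : ℝ} (hGM : ∀ᵐ t ∂μ, ∀ x, ‖G t x‖ ≤ M * ‖x‖) (hG₀M : ∀ᵐ t ∂μ, ∀ x, ‖G₀ t x‖ ≤ M * ‖x‖)
    {u w : α → E} (hu : AEStronglyMeasurable u μ) (hw : AEStronglyMeasurable w μ) :
    eLpNorm (fun t => G t (u t) - G₀ t (u t)) p μ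
      ≤ eLpNorm (fun t => G t (w t) - G₀ t (w t)) p μ
        + 2 * ENNReal.ofReal M * eLpNorm (fun t => u t - w t) p μ := by
  have hsplit : (fun t => G t (u t) - G₀ t (u t)) = (fun t => G t (u t - w t))
      + (fun t => G t (w t) - G₀ t (w t)) + fun t => G₀ t (w t - u t) := by
    ext t
    simp only [Pi.add_apply, map_sub]
    abel
  have hGu : AEStronglyMeasurable (fun t => G t (u t - w t)) μ :=
    (hu.sub hw).clm_apply_of_stronglyMeasurable hGm
  have hGw : AEStronglyMeasurable (fun t => G t (w t) - G₀ t (w t)) μ :=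
    (hw.clm_apply_of_stronglyMeasurable hGm).sub (hw.clm_apply_of_stronglyMeasurable hG₀m)
  have hG₀u : AEStronglyMeasurable (fun t => G₀ t (w t - u t)) μ :=
    (hw.sub hu).clm_apply_of_stronglyMeasurable hG₀m
  have hwu : eLpNorm (fun t => w t - u t) p μ = eLpNorm (fun t => u t - w t) p μ :=
    eLpNorm_sub_comm w u p μ
  calc eLpNorm (fun t => G t (u t) - G₀ t (u t)) p μ
      ≤ eLpNorm (fun t => G t (u t - w t)) p μ + eLpNorm (fun t => G t (w t) - G₀ t (w t)) p μ
        + eLpNorm (fun t => G₀ t (w t - u t)) p μ := by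
        rw [hsplit]
        exact (eLpNorm_add_le (hGu.add hGw) hG₀u hp1).trans
          (by gcongr; exact eLpNorm_add_le hGu hGw hp1)
    _ ≤ ENNReal.ofReal M * eLpNorm (fun t => u t - w t) p μ
        + eLpNorm (fun t => G t (w t) - G₀ t (w t)) p μ
        + ENNReal.ofReal M * eLpNorm (fun t => w t - u t) p μ := by
        gcongr
        · exact eLpNorm_le_mul_eLpNorm_of_ae_le_mul (hGM.mono fun t ht => ht _) p
        · exact eLpNorm_le_mul_eLpNorm_of_ae_le_mul (hG₀M.mono fun t ht => ht _) p
    _ = eLpNorm (fun t => G t (w t) - G₀ t (w t)) p μ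
        + 2 * ENNReal.ofReal M * eLpNorm (fun t => u t - w t) p μ := by
        rw [hwu]
        ring

variable (hp1 : 1 ≤ p) (hp : p ≠ ⊤)
  (hBm : ∀ n x, StronglyMeasurable fun t => B n t x)
  (hB₀m : ∀ x, StronglyMeasurable fun t => B₀ t x) {M : ℝ}
  (hBM : ∀ n, ∀ᵐ t ∂μ, ∀ x, ‖B n t x‖ ≤ M * ‖x‖) (hB₀M : ∀ᵐ t ∂μ, ∀ x, ‖B₀ t x‖ ≤ M * ‖x‖)
  (hconst : ∀ x, Tendsto (fun n => eLpNorm (fun t => B n t x - B₀ t x) p μ) atTop (𝓝 0))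
include hp1 hp hBm hB₀m hBM hB₀M hconst

theorem tendsto_eLpNorm_apply_sub_of_memLp {u : α → E} (hu : MemLp u p μ) :
    Tendsto (fun n => eLpNorm (fun t => B n t (u t) - B₀ t (u t)) p μ) atTop (𝓝 0) := by
  refine ENNReal.tendsto_nhds_zero.2 fun ε hε => ?_
  obtain ⟨δ, hδ, hδε⟩ := ENNReal.exists_pos_mul_lt (a := 2 * ENNReal.ofReal M)
    (ENNReal.mul_ne_top (by simp) ENNReal.ofReal_ne_top) hε.ne'
  obtain ⟨s, hus, -⟩ := hu.exists_simpleFunc_eLpNorm_sub_lt hp hδ.ne'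
  have hlim := (tendsto_eLpNorm_apply_sub_of_simpleFunc hp1 hBm hB₀m hconst s).add_const
    (2 * ENNReal.ofReal M * δ)
  rw [zero_add] at hlim
  filter_upwards [hlim.eventually (gt_mem_nhds (by rwa [mul_comm] at hδε))] with n hn
  calc eLpNorm (fun t => B n t (u t) - B₀ t (u t)) p μ
      ≤ eLpNorm (fun t => B n t (s t) - B₀ t (s t)) p μ
        + 2 * ENNReal.ofReal M * eLpNorm (fun t => u t - s t) p μ :=
        eLpNorm_apply_sub_apply_le hp1 (hBm n) hB₀m (hBM n) hB₀M hu.1 s.aestronglyMeasurable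
    _ ≤ eLpNorm (fun t => B n t (s t) - B₀ t (s t)) p μ + 2 * ENNReal.ofReal M * δ := by
        gcongr
        exact hus.le
    _ ≤ ε := hn.le

theorem tendsto_eLpNorm_apply_sub_apply {u : α → E} {v : ℕ → α → E} (hu : MemLp u p μ)
    (hv : ∀ n, AEStronglyMeasurable (v n) μ)
    (hvu : Tendsto (fun n => eLpNorm (fun t => v n t - u t) p μ) atTop (𝓝 0)) :
    Tendsto (fun n => eLpNorm (fun t => B n t (v n t) - B₀ t (u t)) p μ) atTop (𝓝 0) := by
  have hbound : ∀ n, eLpNorm (fun t => B n t (v n t) - B₀ t (u t)) p μ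
      ≤ ENNReal.ofReal M * eLpNorm (fun t => v n t - u t) p μ
        + eLpNorm (fun t => B n t (u t) - B₀ t (u t)) p μ := by
    intro n
    have hsplit : (fun t => B n t (v n t) - B₀ t (u t))
        = (fun t => B n t (v n t - u t)) + fun t => B n t (u t) - B₀ t (u t) := by
      ext t
      simp only [Pi.add_apply, map_sub]
      abel
    rw [hsplit]
    refine (eLpNorm_add_le ?_ ?_ hp1).trans ?_
    · exact ((hv n).sub hu.1).clm_apply_of_stronglyMeasurable (hBm n)
    · exact (hu.1.clm_apply_of_stronglyMeasurable (hBm n)).sub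
        (hu.1.clm_apply_of_stronglyMeasurable hB₀m)
    · gcongr
      exact eLpNorm_le_mul_eLpNorm_of_ae_le_mul ((hBM n).mono fun t ht => ht _) p
  have hlim := (ENNReal.Tendsto.const_mul (a := ENNReal.ofReal M) hvu
    (Or.inr ENNReal.ofReal_ne_top)).add
    (tendsto_eLpNorm_apply_sub_of_memLp hp1 hp hBm hB₀m hBM hB₀M hconst hu)
  rw [mul_zero, add_zero] at hlim
  exact tendsto_of_tendsto_of_tendsto_of_le_of_le tendsto_const_nhds hlim (fun _ => zero_le)
    hbound

end OperatorFamily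

end MeasureTheory

theorem ae_tendsto_setAverage_Icc {E : Type*} [NormedAddCommGroup E] [NormedSpace ℝ E]
    [CompleteSpace E] {f : ℝ → E} (hf : LocallyIntegrable f) :
    ∀ᵐ t, ∀ {a b : ℕ → ℝ}, Tendsto (fun n => b n - a n) atTop (𝓝[>] 0) →
      (∀ n, t ∈ Icc (a n) (b n)) →
      Tendsto (fun n => ⨍ r in Icc (a n) (b n), f r) atTop (𝓝 (f t)) := by
  filter_upwards [IsUnifLocDoublingMeasure.ae_tendsto_average volume hf 1] with t ht a b hab hmem
  have hball : ∀ n, Icc (a n) (b n) = Metric.closedBall ((a n + b n) / 2) ((b n - a n) / 2) := by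
    intro n
    rw [Real.closedBall_eq_Icc]
    congr 1 <;> ring
  simp_rw [hball]
  obtain ⟨hab0, habpos⟩ := tendsto_nhdsWithin_iff.1 hab
  refine ht _ _ (tendsto_nhdsWithin_iff.2 ⟨?_, habpos.mono fun n hn => half_pos (mem_Ioi.1 hn)⟩)
    (Eventually.of_forall fun n => ?_)
  · simpa using hab0.div_const 2
  · rw [one_mul, ← hball]
    exact hmem n

section UniformSubdivision

variable {E : Type*} [NormedAddCommGroup E] [NormedSpace ℝ E] {T : ℝ} {n k : ℕ} {t : ℝ}

/-- The cell `[λ_k, λ_{k+1}]` of the uniform subdivision of `[0,T]` into `n + 1` cells. -/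
def uniformCell (T : ℝ) (n k : ℕ) : Set ℝ :=
  Icc ((k : ℝ) * (T / (n + 1))) (((k : ℝ) + 1) * (T / (n + 1)))

theorem uidx_le : uidx T n t ≤ n := min_le_right _ _

theorem measurable_uidx : Measurable (uidx T n) := by
  unfold uidx
  fun_prop

theorem uniformCell_subset_Icc (hT : 0 ≤ T) (hk : k ≤ n) : uniformCell T n k ⊆ Icc 0 T := by
  have hk' : (k : ℝ) + 1 ≤ n + 1 := by exact_mod_cast Nat.succ_le_succ hk
  refine Icc_subset_Icc (by positivity) ?_
  calc ((k : ℝ) + 1) * (T / (n + 1)) ≤ (n + 1) * (T / (n + 1)) := by gcongr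
    _ = T := by field_simp

theorem volume_real_uniformCell (hT : 0 ≤ T) : volume.real (uniformCell T n k) = T / (n + 1) := by
  rw [uniformCell, Real.volume_real_Icc_of_le (by gcongr; linarith)]
  ring

theorem mem_uniformCell_uidx (hT : 0 < T) (ht : t ∈ Ioc 0 T) :
    t ∈ uniformCell T n (uidx T n t) := by
  have hh : 0 < T / (n + 1) := by positivity
  have hscaled : t * (n + 1) / T = t / (T / (n + 1)) := by field_simp
  have hfloor_le : (⌊t * (n + 1) / T⌋₊ : ℝ) * (T / (n + 1)) ≤ t := by
    rw [← le_div_iff₀ hh, ← hscaled]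
    exact Nat.floor_le (by positivity [ht.1.le])
  rw [uniformCell, uidx]
  rcases le_total ⌊t * (n + 1) / T⌋₊ n with hle | hle
  · rw [min_eq_left hle]
    refine ⟨hfloor_le, ?_⟩
    rw [← div_le_iff₀ hh, ← hscaled]
    exact (Nat.lt_floor_add_one _).le
  · rw [min_eq_right hle]
    refine ⟨le_trans (by gcongr) hfloor_le, ?_⟩
    calc t ≤ T := ht.2
      _ = (n + 1) * (T / (n + 1)) := by field_simp

theorem uavg_eq_setAverage (hT : 0 ≤ T) (f : ℝ → E) :
    uavg f T n k = ⨍ r in uniformCell T n k, f r := by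
  have hle : (k : ℝ) * (T / (n + 1)) ≤ ((k : ℝ) + 1) * (T / (n + 1)) := by gcongr; linarith
  rw [setAverage_eq, volume_real_uniformCell hT, uniformCell, integral_Icc_eq_integral_Ioc,
    ← intervalIntegral.integral_of_le hle, uavg, inv_div]

theorem stepApprox_eq_setAverage (hT : 0 ≤ T) (f : ℝ → E) :
    stepApprox f T n t = ⨍ r in uniformCell T n (uidx T n t), f r :=
  uavg_eq_setAverage hT f

theorem stronglyMeasurable_stepApprox (f : ℝ → E) (T : ℝ) (n : ℕ) :
    StronglyMeasurable (stepApprox f T n) :=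
  StronglyMeasurable.of_discrete.comp_measurable measurable_uidx

theorem norm_stepApprox_le (hT : 0 < T) {f : ℝ → E} {M : ℝ} (hf : ∀ r ∈ Icc 0 T, ‖f r‖ ≤ M) :
    ‖stepApprox f T n t‖ ≤ M := by
  have hh : 0 < T / (n + 1) := by positivity
  have hint := norm_setIntegral_le_of_norm_le_const (μ := volume)
    (s := uniformCell T n (uidx T n t)) measure_Icc_lt_top
    fun r hr => hf r (uniformCell_subset_Icc hT.le uidx_le hr)
  rw [volume_real_uniformCell hT.le] at hint
  rw [stepApprox_eq_setAverage hT.le, setAverage_eq, volume_real_uniformCell hT.le, norm_smul,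
    norm_inv, Real.norm_of_nonneg hh.le]
  calc (T / (n + 1))⁻¹ * ‖∫ r in uniformCell T n (uidx T n t), f r‖
      ≤ (T / (n + 1))⁻¹ * (M * (T / (n + 1))) := by gcongr
    _ = M := by field_simp

theorem stepApprox_add (hT : 0 ≤ T) {f g : ℝ → E} (hf : IntegrableOn f (Icc 0 T))
    (hg : IntegrableOn g (Icc 0 T)) :
    stepApprox (fun r => f r + g r) T n t = stepApprox f T n t + stepApprox g T n t := by
  have hcell := uniformCell_subset_Icc hT (uidx_le (T := T) (n := n) (t := t))
  simp only [stepApprox_eq_setAverage hT, setAverage_eq,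
    integral_add (hf.mono_set hcell) (hg.mono_set hcell), smul_add]

theorem stepApprox_smul (c : ℝ) (f : ℝ → E) :
    stepApprox (fun r => c • f r) T n t = c • stepApprox f T n t := by
  simp only [stepApprox, uavg, intervalIntegral.integral_smul, smul_comm c]

theorem ae_tendsto_stepApprox [CompleteSpace E] (hT : 0 < T) {f : ℝ → E}
    (hf : IntegrableOn f (Icc 0 T)) :
    ∀ᵐ t ∂volume.restrict (Ioc 0 T), Tendsto (fun n => stepApprox f T n t) atTop (𝓝 (f t)) := by
  have hloc : LocallyIntegrable ((Icc 0 T).indicator f) :=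
    (hf.integrable_indicator measurableSet_Icc).locallyIntegrable
  filter_upwards [ae_restrict_of_ae (ae_tendsto_setAverage_Icc hloc),
    ae_restrict_mem measurableSet_Ioc] with t ht htT
  have hmesh : Tendsto (fun n : ℕ => ((uidx T n t : ℝ) + 1) * (T / (n + 1))
      - uidx T n t * (T / (n + 1))) atTop (𝓝[>] 0) := by
    refine tendsto_nhdsWithin_iff.2 ⟨?_, Eventually.of_forall fun n => ?_⟩
    · simpa [add_mul, Function.comp_def] using
        (tendsto_const_div_atTop_nhds_zero_nat T).comp (tendsto_add_atTop_nat 1)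
    · simp only [add_mul, one_mul, add_sub_cancel_left, mem_Ioi]
      positivity
  have hlim := ht hmesh fun n => mem_uniformCell_uidx hT htT
  rw [indicator_of_mem (Ioc_subset_Icc_self htT)] at hlim
  refine hlim.congr fun n => ?_
  rw [stepApprox_eq_setAverage hT.le]
  exact setAverage_congr_fun measurableSet_Icc (ae_of_all _ fun r hr =>
    indicator_of_mem (uniformCell_subset_Icc hT.le uidx_le hr) f)

theorem tendsto_eLpNorm_stepApprox_sub [CompleteSpace E] (hT : 0 < T) {f : ℝ → E}
    (hfm : StronglyMeasurable f) {M : ℝ} (hf : ∀ r ∈ Icc 0 T, ‖f r‖ ≤ M) {p : ENNReal} (hp1 : 1 ≤ p) (hp : p ≠ ⊤) :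
    Tendsto (fun n => eLpNorm (fun t => stepApprox f T n t - f t) p
      (volume.restrict (Ioc 0 T))) atTop (𝓝 0) := by
  have hfi : IntegrableOn f (Icc 0 T) := Measure.integrableOn_of_bounded
    measure_Icc_lt_top.ne hfm.aestronglyMeasurable (ae_restrict_of_forall_mem measurableSet_Icc hf)
  have hfM : ∀ᵐ t ∂volume.restrict (Ioc 0 T), ‖f t‖ ≤ M :=
    ae_restrict_of_forall_mem measurableSet_Ioc fun t ht => hf t (Ioc_subset_Icc_self ht)
  exact tendsto_Lp_finite_of_tendsto_ae hp1 hp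
    (fun n => (stronglyMeasurable_stepApprox f T n).aestronglyMeasurable)
    (MemLp.of_bound hfm.aestronglyMeasurable M hfM)
    (unifIntegrable_of_ae_norm_le hp1 hp
      (fun n => (stronglyMeasurable_stepApprox f T n).aestronglyMeasurable)
      fun n => ae_of_all _ fun t => norm_stepApprox_le hT hf)
    (ae_tendsto_stepApprox hT hfi)

end UniformSubdivision

section OperatorStepApprox

variable {E D : Type*} [NormedAddCommGroup E] [NormedSpace ℝ E] [NormedAddCommGroup D]
  [NormedSpace ℝ D] {T : ℝ} {A : ℝ → D →L[ℝ] E} {C : ℝ}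

def opStepCLM (hT : 0 < T) (hA : ∀ x, IntegrableOn (fun r => A r x) (Icc 0 T))
    (hC : ∀ t ∈ Icc 0 T, ∀ x, ‖A t x‖ ≤ C * ‖x‖) (n : ℕ) (t : ℝ) : D →L[ℝ] E :=
  LinearMap.mkContinuous
    { toFun := opStep A T n t
      map_add' := fun x y => by
        simpa only [opStep, map_add] using stepApprox_add hT.le (hA x) (hA y)
      map_smul' := fun c x => by
        simpa only [opStep, map_smul, RingHom.id_apply] using stepApprox_smul c fun r => A r x }
    C fun x => norm_stepApprox_le hT fun r hr => hC r hr x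

end OperatorStepApprox

theorem opStep_apply_tendsto_Lp_general
    {D : Type*} [NormedAddCommGroup D] [NormedSpace ℝ D]
    (T : ℝ) (hT : 0 < T) (A : ℝ → D →L[ℝ] X)
    (hmeas : ∀ x : D, StronglyMeasurable fun t => A t x)
    (C : ℝ) (hbd : ∀ t ∈ Set.Icc (0 : ℝ) T, ∀ x : D, ‖A t x‖ ≤ C * ‖x‖)
    (p : ENNReal) (hp1 : 1 ≤ p) (hp : p ≠ ⊤)
    (u : ℝ → D) (uΛ : ℕ → ℝ → D)
    (hu : MemLp u p (volume.restrict (Set.Ioc 0 T)))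
    (huΛ : ∀ n, MemLp (uΛ n) p (volume.restrict (Set.Ioc 0 T)))
    (hconv : Tendsto (fun n => eLpNorm (fun t => uΛ n t - u t) p
        (volume.restrict (Set.Ioc 0 T))) atTop (nhds 0)) :
    Tendsto (fun n => eLpNorm (fun t => opStep A T n t (uΛ n t) - A t (u t)) p
        (volume.restrict (Set.Ioc 0 T))) atTop (nhds 0) := by
  have hA : ∀ x, IntegrableOn (fun r => A r x) (Icc 0 T) := fun x =>
    Measure.integrableOn_of_bounded measure_Icc_lt_top.ne (hmeas x).aestronglyMeasurable
      (ae_restrict_of_forall_mem measurableSet_Icc fun t ht => hbd t ht x)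
  have hAμ : ∀ᵐ t ∂volume.restrict (Ioc 0 T), ∀ x, ‖A t x‖ ≤ C * ‖x‖ :=
    ae_restrict_of_forall_mem measurableSet_Ioc fun t ht => hbd t (Ioc_subset_Icc_self ht)
  exact tendsto_eLpNorm_apply_sub_apply (B := opStepCLM hT hA hbd) hp1 hp
    (fun n x => stronglyMeasurable_stepApprox _ T n) hmeas
    (fun n => ae_of_all _ fun t x => norm_stepApprox_le hT fun r hr => hbd r hr x) hAμ
    (fun x => tendsto_eLpNorm_stepApprox_sub hT (hmeas x) (fun r hr => hbd r hr x) hp1 hp)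
    hu (fun n => (huΛ n).1) hconv

/-- Let `D ↪ X` be a continuous dense embedding of Banach spaces and
`A : [0,T] → L(D,X)` bounded and strongly measurable.  If `u_Λ → u` in
`L^p(0,T;D)`, then `A_Λ^S(·)u_Λ(·) → A(·)u(·)` in `L^p(0,T;X)` as the mesh of the
uniform subdivision `Λ` tends to `0`. -/
theorem opStep_apply_tendsto_Lp
    {D : Type*} [NormedAddCommGroup D] [NormedSpace ℝ D] [CompleteSpace D]
    (ι : D →L[ℝ] X) (hinj : Function.Injective ι) (hdense : DenseRange ι)
    (T : ℝ) (hT : 0 < T) (A : ℝ → D →L[ℝ] X)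
    (hmeas : ∀ x : D, StronglyMeasurable fun t => A t x)
    (C : ℝ) (hbd : ∀ t ∈ Set.Icc (0 : ℝ) T, ∀ x : D, ‖A t x‖ ≤ C * ‖x‖)
    (p : ENNReal) (hp1 : 1 ≤ p) (hp : p ≠ ⊤)
    (u : ℝ → D) (uΛ : ℕ → ℝ → D)
    (hu : MemLp u p (volume.restrict (Set.Ioc 0 T)))
    (huΛ : ∀ n, MemLp (uΛ n) p (volume.restrict (Set.Ioc 0 T)))
    (hconv : Tendsto (fun n => eLpNorm (fun t => uΛ n t - u t) p
        (volume.restrict (Set.Ioc 0 T))) atTop (nhds 0)) :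
    Tendsto (fun n => eLpNorm (fun t => opStep A T n t (uΛ n t) - A t (u t)) p
        (volume.restrict (Set.Ioc 0 T))) atTop (nhds 0) :=
  opStep_apply_tendsto_Lp_general T hT A hmeas C hbd p hp1 hp u uΛ hu huΛ hconv

end
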